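/- arXiv:2508.08648 — 3 statements merged into one kernel-verified Lean document; each statement's English description precedes it below -/
import Mathlib

section
/- Let K be a field, (M, α) a log structure on K, R a valuation subring of K, and N := {m : M | α m ∈ R}, a submonoid of M. Then for every m ∈ M there exists u ∈ M such that u is invertible in M, α u ∈ R, and α (m * u) ∈ R; in particular every element of M can be written as n * u⁻¹ with n ∈ N and u an invertible element of M lying in N. (This is the surjectivity of N^gp → M^gp underlying the equality M_D^gp = M_η^gp in the proof that G_m^log is log proper, Proposition 2.5.) -/
/-! If `α m ∉ R`, then `α m ≠ 0` and `(α m)⁻¹ ∈ R` because `R` is a valuation subring; the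
log structure provides `u` with `α u = (α m)⁻¹`, and `u` is a unit of `M` since elements with
nonzero image are units (injectivity on the nonzero locus forces `u * u' = 1` when
`α u' = (α u)⁻¹`). Then `α (m * u) = 1 ∈ R`. If `α m ∈ R`, take `u = 1`. -/

section LogStructure

variable {K M : Type*} [GroupWithZero K] [CommMonoid M]

def IsLogStructure (α : M →* K) : Prop :=
  Function.Bijective (fun m : {m : M // α m ≠ 0} => (⟨α m.1, m.2⟩ : {x : K // x ≠ 0}))

namespace IsLogStructure

variable {α : M →* K}

theorem exists_map_eq (hα : IsLogStructure α) {x : K} (hx : x ≠ 0) : ∃ m : M, α m = x := by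
  obtain ⟨⟨m, _⟩, hm⟩ := hα.2 ⟨x, hx⟩
  exact ⟨m, congrArg Subtype.val hm⟩

theorem isUnit_of_map_ne_zero (hα : IsLogStructure α) {m : M} (hm : α m ≠ 0) : IsUnit m := by
  obtain ⟨m', hm'⟩ := hα.exists_map_eq (inv_ne_zero hm)
  have hprod : α (m * m') = α 1 := by rw [map_mul, hm', mul_inv_cancel₀ hm, map_one]
  have hne : α (m * m') ≠ 0 := by rw [hprod, map_one]; exact one_ne_zero
  have hmm' : (⟨m * m', hne⟩ : {m : M // α m ≠ 0}) = ⟨1, hprod ▸ hne⟩ :=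
    hα.1 (Subtype.ext hprod)
  exact IsUnit.of_mul_eq_one m' (congrArg Subtype.val hmm')

theorem exists_isUnit_map_eq (hα : IsLogStructure α) {x : K} (hx : x ≠ 0) :
    ∃ u : M, IsUnit u ∧ α u = x := by
  obtain ⟨u, hu⟩ := hα.exists_map_eq hx
  exact ⟨u, hα.isUnit_of_map_ne_zero (hu ▸ hx), hu⟩

end IsLogStructure

end LogStructure

/-- Let `K` be a field, `(M, α)` a log structure on `K`, `R` a valuation
subring of `K`, and `N := {m : M | α m ∈ R}` the corresponding submonoid of `M`.  Then for
every `m ∈ M` there exists `u ∈ M` which is invertible in `M`, with `α u ∈ R` and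
`α (m * u) ∈ R`; in particular every element of `M` is of the form `n * u⁻¹` with
`n ∈ N` and `u` an invertible element of `M` lying in `N`.  (Surjectivity of
`N^gp → M^gp` in the proof that `G_m^log` is log proper.) -/
theorem log_structure_valuation_gp_surjective
    {K M : Type*} [Field K] [CommMonoid M] (α : M →* K)
    (hbij : Function.Bijective
      (fun m : {m : M // α m ≠ 0} => (⟨α m.1, m.2⟩ : {x : K // x ≠ 0})))
    (R : ValuationSubring K) :
    ∀ m : M, ∃ u : M, IsUnit u ∧ α u ∈ R ∧ α (m * u) ∈ R := by
  have hα : IsLogStructure α := hbij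
  intro m
  by_cases hmR : α m ∈ R
  · exact ⟨1, isUnit_one, by simp, by simpa using hmR⟩
  have hm0 : α m ≠ 0 := fun h => hmR (h ▸ R.zero_mem)
  have hinvR : (α m)⁻¹ ∈ R := (R.mem_or_inv_mem (α m)).resolve_left hmR
  obtain ⟨u, hu, hαu⟩ := hα.exists_isUnit_map_eq (inv_ne_zero hm0)
  refine ⟨u, hu, hαu ▸ hinvR, ?_⟩
  rw [map_mul, hαu, mul_inv_cancel₀ hm0]
  exact R.one_mem
end

section
/- Let K be a field, (M, α) a log structure on K, R a valuation subring of K, and N := {m : M | α m ∈ R}, a submonoid of M. Then the inclusion of N into M induces an isomorphism of group completions (Grothendieck groups) N^gp ≅ M^gp. This is the identity M_D^gp = M_η^gp (equation (2.1) of the paper), which is the key step in Proposition 2.5: the functor G_m^log is log proper. -/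
/-- Let `K` be a field, `(M, α)` a log structure on `K`, `R` a valuation
subring of `K`, and `N := {m : M | α m ∈ R}`, a submonoid of `M`.  Then the inclusion of
`N` into `M` induces an isomorphism of group completions (Grothendieck groups)
`N^gp ≅ M^gp`, where the group completion of a commutative monoid is its localization at
the full submonoid `⊤`.  This is the identity `M_D^gp = M_η^gp`, the key step in the
proof that `G_m^log` is log proper. -/
theorem log_structure_valuation_gp_iso
    {K M : Type*} [Field K] [CommMonoid M] (α : M →* K)
    (hbij : Function.Bijective
      (fun m : {m : M // α m ≠ 0} => (⟨α m.1, m.2⟩ : {x : K // x ≠ 0})))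
    (R : ValuationSubring K)
    (N : Submonoid M) (hN : ∀ m : M, m ∈ N ↔ α m ∈ R) :
    Function.Bijective
      ((Localization.monoidOf (⊤ : Submonoid N)).map
        (g := N.subtype)
        (fun y : (⊤ : Submonoid N) => Submonoid.mem_top (N.subtype y))
        (Localization.monoidOf (⊤ : Submonoid M))) := by
  set F := Localization.monoidOf (⊤ : Submonoid N)
  set G := Localization.monoidOf (⊤ : Submonoid M)
  set hg : ∀ y : (⊤ : Submonoid N), N.subtype y ∈ (⊤ : Submonoid M) :=
    fun y => Submonoid.mem_top (N.subtype y)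
  -- key lemma
  have key : ∀ c : M, ∃ d : M, d ∈ N ∧ c * d ∈ N := by
    intro c
    by_cases h : α c ∈ R
    · exact ⟨1, (hN 1).2 (by simpa using R.one_mem), (hN _).2 (by simpa)⟩
    · have hc0 : α c ≠ 0 := fun h0 => h (h0 ▸ R.zero_mem)
      have hinv : (α c)⁻¹ ∈ R := (R.mem_or_inv_mem (α c)).resolve_left h
      obtain ⟨⟨d, hd0⟩, hd⟩ := hbij.2 ⟨(α c)⁻¹, inv_ne_zero hc0⟩
      have hd' : α d = (α c)⁻¹ := congrArg Subtype.val hd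
      refine ⟨d, (hN d).2 (hd' ▸ hinv), (hN _).2 ?_⟩
      rw [map_mul, hd', mul_inv_cancel₀ hc0]
      exact R.one_mem
  constructor
  · -- injective
    intro x y hxy
    obtain ⟨a₁, a₂, rfl⟩ := F.mk'_surjective x
    obtain ⟨b₁, b₂, rfl⟩ := F.mk'_surjective y
    rw [F.map_mk' (k := G) hg, F.map_mk' (k := G) hg] at hxy
    rw [G.mk'_eq_iff_eq, G.eq_iff_exists] at hxy
    obtain ⟨c, hc⟩ := hxy
    obtain ⟨d, hdN, hcd⟩ := key c
    rw [F.mk'_eq_iff_eq, F.eq_iff_exists]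
    refine ⟨⟨⟨(c : M) * d, hcd⟩, trivial⟩, ?_⟩
    have hc' : (c : M) * (((b₂ : N) : M) * (a₁ : M)) = (c : M) * (((a₂ : N) : M) * (b₁ : M)) := by
      simpa using hc
    apply Subtype.ext
    show (c : M) * d * (((b₂ : N) : M) * (a₁ : M)) = (c : M) * d * (((a₂ : N) : M) * (b₁ : M))
    calc (c : M) * d * (((b₂ : N) : M) * (a₁ : M))
        = (c : M) * (((b₂ : N) : M) * (a₁ : M)) * d := mul_right_comm _ _ _
      _ = (c : M) * (((a₂ : N) : M) * (b₁ : M)) * d := by rw [hc']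
      _ = (c : M) * d * (((a₂ : N) : M) * (b₁ : M)) := (mul_right_comm _ _ _).symm
  · -- surjective
    intro z
    obtain ⟨a, b, rfl⟩ := G.mk'_surjective z
    obtain ⟨da, hdaN, haN⟩ := key a
    obtain ⟨db, hdbN, hbN⟩ := key (b : M)
    have hnum : a * (da * db) ∈ N := by
      rw [← mul_assoc]; exact N.mul_mem haN hdbN
    have hden : (b : M) * (da * db) ∈ N := by
      rw [mul_comm da db, ← mul_assoc]; exact N.mul_mem hbN hdaN
    refine ⟨F.mk' ⟨a * (da * db), hnum⟩ ⟨⟨(b : M) * (da * db), hden⟩, trivial⟩, ?_⟩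
    rw [F.map_mk' (k := G) hg, G.mk'_eq_iff_eq]
    congr 1
    show (b : M) * (a * (da * db)) = ((b : M) * (da * db)) * a
    rw [mul_right_comm, mul_assoc]
end

section
/- Let p be a prime and q = p^f with f ≥ 1, and let Z' = ∏_{ℓ prime, ℓ ≠ p} ℤ_ℓ. Since q is a unit in ℤ_ℓ for every ℓ ≠ p, multiplication by q is an automorphism of Z'; form the semidirect product G = Z' ⋊ ℤ in which the integer n acts on Z' as multiplication by qⁿ. Then the abelianization of G is isomorphic to ℤ/(q−1)ℤ × ℤ. -/
/-- The product `Z' = ∏_{ℓ prime, ℓ ≠ p} ℤ_ℓ` of the (additive groups of the) rings of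
`ℓ`-adic integers over all primes `ℓ` different from `p`. -/
def PrimeToPProfinite (p : ℕ) : Type :=
  (ℓ : {l : ℕ // l.Prime ∧ l ≠ p}) → @PadicInt ℓ.1 ⟨ℓ.2.1⟩

noncomputable instance (p : ℕ) : AddCommGroup (PrimeToPProfinite p) := by
  unfold PrimeToPProfinite; infer_instance

/-!
In `N ⋊ ℤ` with `N` abelian, conjugation by the generator of `ℤ` acts on `N` as `σ`, so the
abelianization is `N_σ × ℤ`, where `N_σ = N ⧸ (σ - 1)N` are the coinvariants. For `σ = q •` on
`Z'` these are `Z' ⧸ (q - 1)Z'`. As `q - 1` is prime to `p`, reducing `ℤ_ℓ` modulo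
`ℓ ^ v_ℓ(q - 1)` for the primes `ℓ ∣ q - 1` and applying the Chinese remainder theorem identifies
this quotient with `ℤ/(q - 1)`; the factors with `ℓ ∤ q - 1` drop out since `q - 1` is a unit
in `ℤ_ℓ`.
-/

theorem Nat.Coprime.ne_of_mem_primeFactors {p m ℓ : ℕ} (hpm : p.Coprime m)
    (hℓ : ℓ ∈ m.primeFactors) : ℓ ≠ p := by
  rintro rfl
  exact (Nat.prime_of_mem_primeFactors hℓ).one_lt.ne' <|
    hpm.eq_one_of_dvd (Nat.dvd_of_mem_primeFactors hℓ)

namespace SemidirectProduct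

theorem abelianization_of_inl_aut {N G : Type*} [Group N] [Group G] {φ : G →* MulAut N}
    (g : G) (n : N) :
    Abelianization.of (inl (φ g n) : N ⋊[φ] G) = Abelianization.of (inl n) := by
  rw [inl_aut, map_inv, map_mul, map_mul, map_inv, mul_right_comm, mul_inv_cancel, one_mul]

variable {N : Type*} [AddCommGroup N] (σ : N ≃+ N)

def coinvariantsKer : AddSubgroup N := (σ.toAddMonoidHom - AddMonoidHom.id N).range

theorem mk_apply_coinvariantsKer (x : N) :
    (QuotientAddGroup.mk (σ x) : N ⧸ coinvariantsKer σ) = QuotientAddGroup.mk x :=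
  (QuotientAddGroup.eq_iff_sub_mem).2 ⟨x, rfl⟩

theorem mk_zpow_apply_coinvariantsKer (k : ℤ) (x : Multiplicative N) :
    (QuotientAddGroup.mk ((AddEquiv.toMultiplicative σ ^ k) x).toAdd : N ⧸ coinvariantsKer σ)
      = QuotientAddGroup.mk x.toAdd := by
  induction k using Int.induction_on generalizing x with
  | zero => rfl
  | succ k ih => rw [zpow_add_one, MulAut.mul_apply, ih]; exact mk_apply_coinvariantsKer σ _
  | pred k ih =>
    rw [zpow_sub_one, MulAut.mul_apply, ih, ← mk_apply_coinvariantsKer σ]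
    exact congrArg _ ((AddEquiv.toMultiplicative σ).apply_symm_apply x)

abbrev OfAddAut := Multiplicative N ⋊[zpowersHom _ (AddEquiv.toMultiplicative σ)] Multiplicative ℤ

def abelianizationToCoinvariantsProd :
    Additive (Abelianization (OfAddAut σ)) →+ (N ⧸ coinvariantsKer σ) × ℤ :=
  MonoidHom.toAdditiveLeft <| Abelianization.lift <|
    lift (AddMonoidHom.toMultiplicative ((AddMonoidHom.inl _ ℤ).comp (QuotientAddGroup.mk' _)))
      (AddMonoidHom.toMultiplicative (AddMonoidHom.inr _ ℤ)) fun k => by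
        refine MonoidHom.ext fun x => ?_
        simp only [MonoidHom.comp_apply, MulEquiv.coe_toMonoidHom, MulAut.conj_apply,
          mul_inv_cancel_comm, zpowersHom_apply, AddMonoidHom.toMultiplicative_apply_apply,
          AddMonoidHom.comp_apply, QuotientAddGroup.mk'_apply, mk_zpow_apply_coinvariantsKer]

def coinvariantsProdToAbelianization :
    (N ⧸ coinvariantsKer σ) × ℤ →+ Additive (Abelianization (OfAddAut σ)) :=
  (QuotientAddGroup.lift _ (MonoidHom.toAdditiveRight (Abelianization.of.comp inl)) (by
      rintro _ ⟨y, rfl⟩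
      have := abelianization_of_inl_aut (φ := zpowersHom _ (AddEquiv.toMultiplicative σ))
        (Multiplicative.ofAdd 1) (Multiplicative.ofAdd y)
      simpa [sub_eq_zero] using this)).coprod
    (MonoidHom.toAdditiveRight (Abelianization.of.comp inr))

theorem abelianizationToCoinvariantsProd_of (g : OfAddAut σ) :
    abelianizationToCoinvariantsProd σ (Additive.ofMul (Abelianization.of g)) =
      (QuotientAddGroup.mk g.left.toAdd, g.right.toAdd) := by
  simp [abelianizationToCoinvariantsProd, lift]

theorem coinvariantsProdToAbelianization_mk (n : N) (k : ℤ) :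
    coinvariantsProdToAbelianization σ (QuotientAddGroup.mk n, k) =
      Additive.ofMul (Abelianization.of (inl (.ofAdd n) * inr (.ofAdd k))) := by
  simp [coinvariantsProdToAbelianization]

def abelianizationEquivCoinvariantsProd :
    Additive (Abelianization (OfAddAut σ)) ≃+ (N ⧸ coinvariantsKer σ) × ℤ :=
  AddMonoidHom.toAddEquiv (abelianizationToCoinvariantsProd σ)
    (coinvariantsProdToAbelianization σ)
    (AddMonoidHom.ext fun x => by
      induction x using QuotientGroup.induction_on with | H g => ?_
      change coinvariantsProdToAbelianization σ (abelianizationToCoinvariantsProd σ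
        (Additive.ofMul (Abelianization.of g))) = Additive.ofMul (Abelianization.of g)
      rw [abelianizationToCoinvariantsProd_of, coinvariantsProdToAbelianization_mk]
      simp)
    (AddMonoidHom.ext fun ⟨a, k⟩ => by
      induction a using QuotientAddGroup.induction_on
      simp [coinvariantsProdToAbelianization_mk, abelianizationToCoinvariantsProd_of])

end SemidirectProduct

namespace PadicInt

variable {ℓ : ℕ} [Fact ℓ.Prime]

theorem isUnit_natCast_iff {n : ℕ} : IsUnit (n : ℤ_[ℓ]) ↔ ℓ.Coprime n := by
  rw [isUnit_iff, norm_natCast_eq_one_iff]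

theorem associated_pow_factorization {n : ℕ} (hn : n ≠ 0) :
    Associated ((ℓ : ℤ_[ℓ]) ^ n.factorization ℓ) (n : ℤ_[ℓ]) := by
  have hu : IsUnit ((n / ℓ ^ n.factorization ℓ : ℕ) : ℤ_[ℓ]) :=
    isUnit_natCast_iff.2 <| (Nat.Prime.coprime_iff_not_dvd Fact.out).2 <|
      Nat.not_dvd_ordCompl Fact.out hn
  refine ⟨hu.unit, ?_⟩
  rw [IsUnit.unit_spec, ← Nat.cast_pow, ← Nat.cast_mul, Nat.ordProj_mul_ordCompl_eq_self]

theorem natCast_dvd_iff_toZModPow_eq_zero {n : ℕ} (hn : n ≠ 0) (x : ℤ_[ℓ]) :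
    (n : ℤ_[ℓ]) ∣ x ↔ toZModPow (n.factorization ℓ) x = 0 := by
  rw [← Ideal.mem_span_singleton,
    ← Ideal.span_singleton_eq_span_singleton.2 (associated_pow_factorization hn),
    ← ker_toZModPow, RingHom.mem_ker]

end PadicInt

namespace PrimeToPProfinite

variable {p : ℕ}

instance (ℓ : {l : ℕ // l.Prime ∧ l ≠ p}) : Fact ℓ.1.Prime := ⟨ℓ.2.1⟩

instance (n : ℕ) (ℓ : n.primeFactors) : Fact ℓ.1.Prime := ⟨Nat.prime_of_mem_primeFactors ℓ.2⟩

theorem nsmul_apply (n : ℕ) (x : PrimeToPProfinite p) (ℓ : {l : ℕ // l.Prime ∧ l ≠ p}) :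
    (n • x) ℓ = n * x ℓ := by
  rw [← nsmul_eq_mul]; rfl

noncomputable def mulPrimePow (hp : p.Prime) (f : ℕ) : PrimeToPProfinite p ≃+ PrimeToPProfinite p :=
  AddEquiv.piCongrRight fun ℓ => DistribMulAction.toAddEquiv _
    (PadicInt.isUnit_natCast_iff.2 <| (Nat.coprime_primes ℓ.2.1 hp).2 ℓ.2.2 |>.pow_right f).unit

theorem mulPrimePow_apply (hp : p.Prime) (f : ℕ) (x : PrimeToPProfinite p) :
    mulPrimePow hp f x = p ^ f • x := by
  funext ℓ
  change (_ : ℤ_[ℓ.1]ˣ) • x ℓ = _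
  rw [Units.smul_def, IsUnit.unit_spec, smul_eq_mul, nsmul_apply]

noncomputable def toZMod (m : ℕ) (hm : m ≠ 0) (hpm : p.Coprime m) :
    PrimeToPProfinite p →+ ZMod m :=
  AddMonoidHom.mk' (fun x => (ZMod.equivPi m hm).symm fun ℓ =>
      PadicInt.toZModPow (m.factorization ℓ)
        (x ⟨ℓ, Nat.prime_of_mem_primeFactors ℓ.2, hpm.ne_of_mem_primeFactors ℓ.2⟩))
    fun x y => by
      rw [← map_add]
      congr 1
      funext ℓ
      exact map_add _ _ _

variable {m : ℕ} (hm : m ≠ 0) (hpm : p.Coprime m)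

theorem toZMod_natCast (n : ℕ) :
    toZMod m hm hpm (fun ℓ => (n : ℤ_[ℓ.1])) = n := by
  rw [toZMod, AddMonoidHom.mk'_apply, RingEquiv.symm_apply_eq, map_natCast]
  funext ℓ
  simp

theorem toZMod_eq_zero_iff (x : PrimeToPProfinite p) :
    toZMod m hm hpm x = 0 ↔ ∀ ℓ : {l : ℕ // l.Prime ∧ l ≠ p}, (m : ℤ_[ℓ.1]) ∣ x ℓ := by
  rw [toZMod, AddMonoidHom.mk'_apply, EmbeddingLike.map_eq_zero_iff, funext_iff]
  simp only [Pi.zero_apply, ← PadicInt.natCast_dvd_iff_toZModPow_eq_zero hm]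
  refine ⟨fun h ℓ => ?_, fun h ℓ => h ⟨ℓ, Nat.prime_of_mem_primeFactors ℓ.2,
    hpm.ne_of_mem_primeFactors ℓ.2⟩⟩
  by_cases hℓ : ℓ.1 ∈ m.primeFactors
  · exact h ⟨ℓ, hℓ⟩
  · refine (PadicInt.isUnit_natCast_iff.2 ((Nat.Prime.coprime_iff_not_dvd ℓ.2.1).2 ?_)).dvd
    exact fun hdvd => hℓ (Nat.mem_primeFactors_of_ne_zero hm |>.2 ⟨ℓ.2.1, hdvd⟩)

theorem toZMod_surjective : Function.Surjective (toZMod m hm hpm) := fun y => by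
  have : NeZero m := ⟨hm⟩
  obtain ⟨n, rfl⟩ := ZMod.natCast_zmod_surjective y
  exact ⟨_, toZMod_natCast hm hpm n⟩

omit hm hpm in
theorem exists_nsmul_eq_iff (n : ℕ) (x : PrimeToPProfinite p) :
    (∃ y, n • y = x) ↔ ∀ ℓ : {l : ℕ // l.Prime ∧ l ≠ p}, (n : ℤ_[ℓ.1]) ∣ x ℓ := by
  refine ⟨?_, fun h => ?_⟩
  · rintro ⟨y, rfl⟩ ℓ
    rw [nsmul_apply]
    exact dvd_mul_right _ _
  · choose y hy using h
    exact ⟨y, funext fun ℓ => (nsmul_apply n y ℓ).trans (hy ℓ).symm⟩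

omit hm hpm in
theorem mem_coinvariantsKer_mulPrimePow_iff (hp : p.Prime) (f : ℕ) (x : PrimeToPProfinite p) :
    x ∈ SemidirectProduct.coinvariantsKer (mulPrimePow hp f) ↔ ∃ y, (p ^ f - 1) • y = x := by
  simp only [SemidirectProduct.coinvariantsKer, AddMonoidHom.mem_range, AddMonoidHom.sub_apply,
    AddEquiv.coe_toAddMonoidHom, AddMonoidHom.id_apply, mulPrimePow_apply,
    sub_nsmul _ (Nat.one_le_pow f p hp.pos), one_nsmul, ← sub_eq_add_neg]

end PrimeToPProfinite

/-- Let `p` be a prime, `q = p ^ f` with `f ≥ 1`, and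
`Z' = ∏_{ℓ ≠ p} ℤ_ℓ`.  Multiplication by `q` is an automorphism `ψ` of `Z'` (since `q`
is a unit in `ℤ_ℓ` for every `ℓ ≠ p`); forming the semidirect product `G = Z' ⋊ ℤ` in
which the integer `n` acts as multiplication by `q ^ n` (i.e. as `ψ ^ n`), the
abelianization of `G` is isomorphic to `ℤ/(q - 1)ℤ × ℤ`. -/
theorem abelianization_tame_fundamental_group (p f : ℕ) (hp : p.Prime) (hf : 1 ≤ f) :
    ∃ ψ : MulAut (Multiplicative (PrimeToPProfinite p)),
      (∀ x : PrimeToPProfinite p,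
        ψ (Multiplicative.ofAdd x) = Multiplicative.ofAdd ((p ^ f) • x)) ∧
      Nonempty
        (Additive (Abelianization
            (SemidirectProduct (Multiplicative (PrimeToPProfinite p)) (Multiplicative ℤ)
              (zpowersHom (MulAut (Multiplicative (PrimeToPProfinite p))) ψ))) ≃+
          (ZMod (p ^ f - 1) × ℤ)) := by
  have hq : p ^ f - 1 ≠ 0 := by
    have := Nat.one_lt_pow (by omega : f ≠ 0) hp.one_lt
    omega
  have hcop : p.Coprime (p ^ f - 1) :=
    ((Nat.coprime_self_sub_right (Nat.one_le_pow f p hp.pos)).2 (Nat.coprime_one_right _))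
      |>.coprime_dvd_left (dvd_pow_self p (by omega))
  have hker : SemidirectProduct.coinvariantsKer (PrimeToPProfinite.mulPrimePow hp f) =
      (PrimeToPProfinite.toZMod _ hq hcop).ker := AddSubgroup.ext fun x => by
    rw [PrimeToPProfinite.mem_coinvariantsKer_mulPrimePow_iff, AddMonoidHom.mem_ker,
      PrimeToPProfinite.exists_nsmul_eq_iff, PrimeToPProfinite.toZMod_eq_zero_iff]
  refine ⟨AddEquiv.toMultiplicative (PrimeToPProfinite.mulPrimePow hp f),
    fun x => congrArg Multiplicative.ofAdd (PrimeToPProfinite.mulPrimePow_apply hp f x), ⟨?_⟩⟩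
  exact (SemidirectProduct.abelianizationEquivCoinvariantsProd _).trans <|
    ((QuotientAddGroup.quotientAddEquivOfEq hker).trans
      (QuotientAddGroup.quotientKerEquivOfSurjective _
        (PrimeToPProfinite.toZMod_surjective hq hcop))).prodCongr (AddEquiv.refl ℤ)
end
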